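/- arXiv:2204.01877 — 2 statements merged into one kernel-verified Lean document; each statement's English description precedes it below -/
import Mathlib

section
/- (Lipschitz constant of the resolvent.) Let η ∈ ℝⁿ be a positive vector and let F : ℝⁿ → ℝⁿ be continuously differentiable with μ_{∞,η⁻¹}(−DF(x)) ≤ −c for all x ∈ ℝⁿ, where c ≥ 0. Let α > 0, and suppose x, y, u, v ∈ ℝⁿ satisfy x + αF(x) = u and y + αF(y) = v. Then ‖x − y‖_{∞,η⁻¹} ≤ (1/(1 + αc)) ‖u − v‖_{∞,η⁻¹}; that is, the resolvent J_{αF} = (Id + αF)^{−1} is Lipschitz with constant 1/(1 + αc). -/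
open Filter

/-!
Put `w = x - y` and pick a coordinate `i` at which `|w i| / η i` attains `‖w‖_{∞,η⁻¹}`. The
row-`i` condition contained in `μ_{∞,η⁻¹}(-DF(z)) ≤ -c` says that the diagonal entry of `DF(z)`
dominates `c` plus the `η`-weighted off-diagonal entries; since `i` is a maximising coordinate this
gives `c w_i² ≤ w_i (DF(z) w)_i` at every point `z`. Applying the mean value theorem to
`t ↦ w_i (G(y + t w))_i` with `G = Id + αF` yields `(1 + αc) w_i² ≤ w_i (u - v)_i`, hence
`(1 + αc) |w_i| ≤ |(u - v)_i|`; dividing by `η_i` gives the claim.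
-/

/-- Diagonally weighted ℓ∞ norm: ‖x‖_{∞,η⁻¹} = max_i |x_i|/η_i. -/
noncomputable def wNorm {n : ℕ} (η x : Fin n → ℝ) : ℝ := ⨆ i, |x i| / η i

/-- Diagonally weighted ℓ∞ logarithmic norm of a matrix. -/
noncomputable def logNorm {n : ℕ} (η : Fin n → ℝ) (A : Matrix (Fin n) (Fin n) ℝ) : ℝ :=
  ⨆ i, (A i i + ∑ j ∈ Finset.univ.erase i, (η j / η i) * |A i j|)

/-- Jacobian matrix of `F` at `x`: (DF(x))_{ij} = ∂F_i/∂x_j. -/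
noncomputable def jac {n : ℕ} (F : (Fin n → ℝ) → (Fin n → ℝ)) (x : Fin n → ℝ) :
    Matrix (Fin n) (Fin n) ℝ :=
  fun i j => fderiv ℝ F x (Pi.single j 1) i

open Finset Matrix

section WeightedNorm

variable {n : ℕ} {η : Fin n → ℝ}

lemma div_le_wNorm (x : Fin n → ℝ) (i : Fin n) : |x i| / η i ≤ wNorm η x :=
  le_ciSup (f := fun j => |x j| / η j) (Set.finite_range _).bddAbove i

lemma exists_wNorm_eq_div [Nonempty (Fin n)] (η x : Fin n → ℝ) :
    ∃ i, wNorm η x = |x i| / η i := by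
  obtain ⟨i, hi⟩ := Finite.exists_max fun j => |x j| / η j
  exact ⟨i, le_antisymm (ciSup_le hi) (div_le_wNorm x i)⟩

lemma row_le_of_logNorm_le {A : Matrix (Fin n) (Fin n) ℝ} {c : ℝ} (h : logNorm η A ≤ c)
    (i : Fin n) : A i i + ∑ j ∈ univ.erase i, (η j / η i) * |A i j| ≤ c :=
  (le_ciSup (f := fun i => A i i + ∑ j ∈ univ.erase i, (η j / η i) * |A i j|)
    (Set.finite_range _).bddAbove i).trans h

theorem mul_sq_le_mul_mulVec_of_logNorm_neg_le (hη : ∀ i, 0 < η i)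
    {A : Matrix (Fin n) (Fin n) ℝ} {c : ℝ} (hA : logNorm η (-A) ≤ -c)
    {w : Fin n → ℝ} {i : Fin n} (hi : wNorm η w = |w i| / η i) :
    c * w i ^ 2 ≤ w i * (A *ᵥ w) i := by
  set S := ∑ j ∈ univ.erase i, (η j / η i) * |A i j|
  have hrow : c + S ≤ A i i := by
    have := row_le_of_logNorm_le hA i
    simp only [Matrix.neg_apply, abs_neg] at this
    linarith
  have hoff : ∀ j ∈ univ.erase i, -((η j / η i) * |A i j| * w i ^ 2) ≤ w i * (A i j * w j) := by
    intro j _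
    have hwj : |w j| ≤ η j / η i * |w i| := by
      have := (div_le_wNorm w j).trans_eq hi
      rw [div_le_div_iff₀ (hη j) (hη i)] at this
      rw [div_mul_eq_mul_div, le_div_iff₀ (hη i)]
      linarith
    have : |w i * (A i j * w j)| ≤ (η j / η i) * |A i j| * w i ^ 2 := by
      rw [abs_mul, abs_mul, ← sq_abs]
      calc |w i| * (|A i j| * |w j|) ≤ |w i| * (|A i j| * (η j / η i * |w i|)) := by gcongr
        _ = _ := by ring
    exact neg_le_of_abs_le this
  have hsplit : w i * (A *ᵥ w) i = A i i * w i ^ 2 + ∑ j ∈ univ.erase i, w i * (A i j * w j) := by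
    rw [mulVec, dotProduct, mul_sum, ← add_sum_erase _ _ (mem_univ i)]
    ring
  have hsum := sum_le_sum hoff
  rw [sum_neg_distrib, ← sum_mul] at hsum
  nlinarith [mul_le_mul_of_nonneg_right hrow (sq_nonneg (w i))]

end WeightedNorm

lemma jac_mulVec {n : ℕ} (F : (Fin n → ℝ) → (Fin n → ℝ)) (x w : Fin n → ℝ) :
    jac F x *ᵥ w = fderiv ℝ F x w := by
  have : jac F x = LinearMap.toMatrix' (fderiv ℝ F x : (Fin n → ℝ) →ₗ[ℝ] Fin n → ℝ) := by
    ext i j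
    rw [LinearMap.toMatrix'_apply]
    rfl
  rw [this, LinearMap.toMatrix'_mulVec]
  rfl

lemma mul_abs_le_abs_of_mul_sq_le {k a b : ℝ} (h : k * a ^ 2 ≤ a * b) : k * |a| ≤ |b| := by
  rcases eq_or_ne a 0 with rfl | ha
  · simp
  have hpos : 0 < |a| := abs_pos.mpr ha
  refine le_of_mul_le_mul_right ?_ hpos
  calc k * |a| * |a| = k * a ^ 2 := by rw [mul_assoc, ← sq, sq_abs]
    _ ≤ |a * b| := h.trans (le_abs_self _)
    _ = |b| * |a| := by rw [abs_mul, mul_comm]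

theorem mul_abs_le_abs_resolvent_sub {n : ℕ} {η : Fin n → ℝ} (hη : ∀ i, 0 < η i)
    {F : (Fin n → ℝ) → (Fin n → ℝ)} (hF : Differentiable ℝ F) {c : ℝ}
    (hmono : ∀ x, logNorm η (-(jac F x)) ≤ -c) {α : ℝ} (hα : 0 ≤ α)
    {x y : Fin n → ℝ} {i : Fin n} (hi : wNorm η (x - y) = |(x - y) i| / η i) :
    (1 + α * c) * |(x - y) i| ≤ |(x + α • F x - (y + α • F y)) i| := by
  set w := x - y
  let f : ℝ → ℝ := fun t => w i * (y + t • w + α • F (y + t • w)) i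
  have hf : ∀ t, HasDerivAt f (w i * (w i + α * (jac F (y + t • w) *ᵥ w) i)) t := by
    intro t
    have hline : HasDerivAt (fun t : ℝ => y + t • w) w t := by
      simpa using ((hasDerivAt_id t).smul_const w).const_add y
    have hG := hline.add (((hF _).hasFDerivAt.comp_hasDerivAt t hline).const_smul α)
    rw [jac_mulVec]
    exact (hasDerivAt_pi.mp hG i).const_mul (w i)
  have hderiv : ∀ t, (1 + α * c) * w i ^ 2 ≤ deriv f t := by
    intro t
    rw [(hf t).deriv]
    have := mul_sq_le_mul_mulVec_of_logNorm_neg_le hη (hmono (y + t • w)) hi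
    nlinarith [mul_le_mul_of_nonneg_left this hα]
  have hmvt := mul_sub_le_image_sub_of_le_deriv (fun t => (hf t).differentiableAt) hderiv
    zero_le_one
  refine mul_abs_le_abs_of_mul_sq_le ?_
  simpa [f, w, mul_sub] using hmvt

/-- Lipschitz constant of the resolvent of a (strongly) monotone operator. -/
theorem stmt_4 {n : ℕ} (η : Fin n → ℝ) (hη : ∀ i, 0 < η i)
    (F : (Fin n → ℝ) → (Fin n → ℝ)) (hF : ContDiff ℝ 1 F)
    (c : ℝ) (hc : 0 ≤ c) (hmono : ∀ x, logNorm η (-(jac F x)) ≤ -c)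
    (α : ℝ) (hα : 0 < α)
    (x y u v : Fin n → ℝ) (hx : x + α • F x = u) (hy : y + α • F y = v) :
    wNorm η (x - y) ≤ (1 / (1 + α * c)) * wNorm η (u - v) := by
  rcases isEmpty_or_nonempty (Fin n) with _ | _
  · simp [wNorm]
  obtain ⟨i, hi⟩ := exists_wNorm_eq_div η (x - y)
  have hkey := mul_abs_le_abs_resolvent_sub hη (hF.differentiable one_ne_zero) hmono hα.le hi
  rw [hx, hy] at hkey
  have hαc : 0 < 1 + α * c := by positivity
  rw [hi, one_div_mul_eq_div, le_div_iff₀ hαc, div_mul_eq_mul_div, mul_comm]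
  exact (div_le_div_of_nonneg_right hkey (hη i).le).trans (div_le_wNorm (u - v) i)
end

section
/- (Forward step method, strongly monotone case.) Let η ∈ ℝⁿ be a positive vector and let F : ℝⁿ → ℝⁿ be continuously differentiable with μ_{∞,η⁻¹}(−DF(x)) ≤ −c for all x ∈ ℝⁿ, where c > 0, and let d > 0 be a diagonal bound for F. Then F has a unique zero x*, and for every α ∈ (0, 1/d] the iteration x_{k+1} = x_k − αF(x_k) satisfies ‖x_{k+1} − x*‖_{∞,η⁻¹} ≤ (1 − αc) ‖x_k − x*‖_{∞,η⁻¹} for all k; consequently x_k → x* as k → ∞. -/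
/-!
For `0 < α ≤ 1/d` the Jacobian of the forward step `x ↦ x - α F(x)` is `1 - α DF(x)`, whose
diagonal is nonnegative; its weighted absolute row sums are therefore `1 + α` times those of
`-DF(x)`, so its induced `‖·‖_{∞,η⁻¹}` norm is at most `1 + α μ(-DF(x)) ≤ 1 - α c`. By the mean
value inequality the forward step is a contraction with factor `1 - α c`. In the coordinates
`y = x / η` the weighted norm is the sup norm, and Banach's fixed point theorem yields the unique
zero and the convergence of the iteration.
-/

open Filter

open Function Finset Topology Matrix

section WeightedNorm

variable {n : ℕ} {η : Fin n → ℝ}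

lemma wNorm_eq_norm_div (hη : ∀ i, 0 < η i) (x : Fin n → ℝ) : wNorm η x = ‖x / η‖ := by
  have habs : ∀ i, |x i| / η i = ‖(x / η) i‖ := fun i => by
    rw [Pi.div_apply, Real.norm_eq_abs, abs_div, abs_of_pos (hη i)]
  simp only [wNorm, habs]
  refine le_antisymm (Real.iSup_le (fun i => norm_le_pi_norm _ i) (norm_nonneg _)) ?_
  exact (pi_norm_le_iff_of_nonneg (Real.iSup_nonneg fun _ => norm_nonneg _)).2
    fun i => le_ciSup (f := fun i => ‖(x / η) i‖) (Set.finite_range _).bddAbove i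

lemma abs_le_mul_wNorm (hη : ∀ i, 0 < η i) (x : Fin n → ℝ) (i : Fin n) :
    |x i| ≤ η i * wNorm η x := by
  rw [mul_comm, ← div_le_iff₀ (hη i)]
  exact le_ciSup (f := fun i => |x i| / η i) (Set.finite_range _).bddAbove i

lemma wNorm_le_of_forall_abs_le [Nonempty (Fin n)] (hη : ∀ i, 0 < η i) {x : Fin n → ℝ} {C : ℝ}
    (h : ∀ i, |x i| ≤ C * η i) : wNorm η x ≤ C :=
  ciSup_le fun i => (div_le_iff₀ (hη i)).2 (h i)

lemma wNorm_mul_eq_norm (hη : ∀ i, 0 < η i) (y : Fin n → ℝ) : wNorm η (η * y) = ‖y‖ := by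
  rw [wNorm_eq_norm_div hη]
  congr 1
  ext i
  simp [(hη i).ne']

lemma mul_div_cancel_of_forall_pos (hη : ∀ i, 0 < η i) (x : Fin n → ℝ) : η * (x / η) = x := by
  ext i
  simp [mul_div_cancel₀ _ (hη i).ne']

lemma diag_add_sum_le_logNorm (A : Matrix (Fin n) (Fin n) ℝ) (i : Fin n) :
    A i i + ∑ j ∈ univ.erase i, (η j / η i) * |A i j| ≤ logNorm η A :=
  le_ciSup (f := fun i => A i i + ∑ j ∈ univ.erase i, (η j / η i) * |A i j|)
    (Set.finite_range _).bddAbove i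

lemma wNorm_sub_smul_mulVec_le (hη : ∀ i, 0 < η i) {A : Matrix (Fin n) (Fin n) ℝ} {c α : ℝ}
    (hA : logNorm η (-A) ≤ -c) (hα : 0 ≤ α) (hdiag : ∀ i, α * A i i ≤ 1) (v : Fin n → ℝ) :
    wNorm η (v - α • A *ᵥ v) ≤ (1 - α * c) * wNorm η v := by
  rcases isEmpty_or_nonempty (Fin n) with hn | hn
  · simp [wNorm]
  refine wNorm_le_of_forall_abs_le hη fun i => ?_
  set W := wNorm η v
  set S := ∑ j ∈ univ.erase i, (η j / η i) * |A i j|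
  have hrow : -A i i + S ≤ -c := by
    simpa only [Matrix.neg_apply, abs_neg] using (diag_add_sum_le_logNorm (-A) i).trans hA
  have hsplit : (v - α • A *ᵥ v) i =
      (1 - α * A i i) * v i - α * ∑ j ∈ univ.erase i, A i j * v j := by
    simp only [Pi.sub_apply, Pi.smul_apply, smul_eq_mul, Matrix.mulVec, dotProduct,
      ← add_sum_erase _ _ (mem_univ i)]
    ring
  have hoff : |∑ j ∈ univ.erase i, A i j * v j| ≤ S * (η i * W) := by
    rw [sum_mul]
    refine (abs_sum_le_sum_abs _ _).trans (sum_le_sum fun j _ => ?_)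
    calc |A i j * v j| ≤ |A i j| * (η j * W) := by
          rw [abs_mul]; gcongr; exact abs_le_mul_wNorm hη v j
      _ = η j / η i * |A i j| * (η i * W) := by field_simp [(hη i).ne']
  have hW : 0 ≤ η i * W := (abs_nonneg _).trans (abs_le_mul_wNorm hη v i)
  calc |(v - α • A *ᵥ v) i|
      ≤ (1 - α * A i i) * |v i| + α * |∑ j ∈ univ.erase i, A i j * v j| := by
        rw [hsplit]
        refine (abs_sub _ _).trans_eq ?_
        rw [abs_mul, abs_mul, abs_of_nonneg (sub_nonneg.2 (hdiag i)), abs_of_nonneg hα]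
    _ ≤ (1 - α * A i i) * (η i * W) + α * (S * (η i * W)) := by
        gcongr
        · exact sub_nonneg.2 (hdiag i)
        · exact abs_le_mul_wNorm hη v i
    _ = (1 + α * (-A i i + S)) * (η i * W) := by ring
    _ ≤ (1 - α * c) * (η i * W) := by
        gcongr
        linarith [mul_le_mul_of_nonneg_left hrow hα]
    _ = (1 - α * c) * W * η i := by ring

lemma wNorm_sub_le_of_fderiv_le (hη : ∀ i, 0 < η i) {G : (Fin n → ℝ) → Fin n → ℝ}
    (hG : Differentiable ℝ G) {K : ℝ} (hK : ∀ z v, wNorm η (fderiv ℝ G z v) ≤ K * wNorm η v)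
    (x y : Fin n → ℝ) : wNorm η (G x - G y) ≤ K * wNorm η (x - y) := by
  set v := x - y
  have hψ : ∀ t : ℝ,
      HasDerivAt (fun t : ℝ => G (y + t • v) / η) (fderiv ℝ G (y + t • v) v / η) t := by
    intro t
    have hline : HasDerivAt (fun t : ℝ => y + t • v) v t := by
      simpa using ((hasDerivAt_id t).smul_const v).const_add y
    have hcomp := (hG _).hasFDerivAt.comp_hasDerivAt t hline
    rw [hasDerivAt_pi] at hcomp ⊢
    exact fun i => (hcomp i).div_const (η i)
  have hmv := norm_image_sub_le_of_norm_deriv_le_segment_01' (fun t _ => (hψ t).hasDerivWithinAt)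
    (fun t _ => (wNorm_eq_norm_div hη _).symm.trans_le (hK _ v))
  have hdiv : G (y + (1 : ℝ) • v) / η - G (y + (0 : ℝ) • v) / η = (G x - G y) / η := by
    ext i
    simp [v, sub_div]
  rwa [hdiv, ← wNorm_eq_norm_div hη] at hmv

end WeightedNorm

section ForwardStep

variable {n : ℕ} {η : Fin n → ℝ} {F : (Fin n → ℝ) → Fin n → ℝ}

def forwardStep (F : (Fin n → ℝ) → Fin n → ℝ) (α : ℝ) (x : Fin n → ℝ) : Fin n → ℝ :=
  x - α • F x

lemma fderiv_apply_eq_jac_mulVec (F : (Fin n → ℝ) → Fin n → ℝ) (z v : Fin n → ℝ) :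
    fderiv ℝ F z v = jac F z *ᵥ v :=
  (LinearMap.toMatrix'_mulVec (fderiv ℝ F z).toLinearMap v).symm

lemma fderiv_forwardStep_apply (hF : Differentiable ℝ F) (α : ℝ) (z v : Fin n → ℝ) :
    fderiv ℝ (forwardStep F α) z v = v - α • jac F z *ᵥ v := by
  have h := ((hasFDerivAt_id z).sub ((hF z).hasFDerivAt.const_smul α)).fderiv
  rw [show forwardStep F α = id - α • F from rfl, h]
  simp [fderiv_apply_eq_jac_mulVec]

lemma wNorm_forwardStep_sub_le (hη : ∀ i, 0 < η i) (hF : Differentiable ℝ F) {c d α : ℝ}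
    (hmono : ∀ x, logNorm η (-(jac F x)) ≤ -c) (hd : 0 < d) (hdiag : ∀ x i, jac F x i i ≤ d)
    (hα : α ∈ Set.Ioc 0 (1 / d)) (x y : Fin n → ℝ) :
    wNorm η (forwardStep F α x - forwardStep F α y) ≤ (1 - α * c) * wNorm η (x - y) := by
  have hαd : α * d ≤ 1 := (le_div_iff₀ hd).1 hα.2
  have hG : Differentiable ℝ (forwardStep F α) := differentiable_id.sub (hF.const_smul α)
  refine wNorm_sub_le_of_fderiv_le hη hG (fun z v => ?_) x y
  rw [fderiv_forwardStep_apply hF]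
  exact wNorm_sub_smul_mulVec_le hη (hmono z) hα.1.le
    (fun i => (mul_le_mul_of_nonneg_left (hdiag z i) hα.1.le).trans hαd) v

noncomputable def scaledForwardStep (η : Fin n → ℝ) (F : (Fin n → ℝ) → Fin n → ℝ) (α : ℝ)
    (y : Fin n → ℝ) : Fin n → ℝ :=
  forwardStep F α (η * y) / η

lemma isFixedPt_scaledForwardStep_iff (hη : ∀ i, 0 < η i) {α : ℝ} (hα : α ≠ 0) (y : Fin n → ℝ) :
    IsFixedPt (scaledForwardStep η F α) y ↔ F (η * y) = 0 := by
  simp only [IsFixedPt, scaledForwardStep, forwardStep, funext_iff, Pi.div_apply, Pi.sub_apply,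
    Pi.mul_apply, Pi.smul_apply, smul_eq_mul, div_eq_iff (hη _).ne', mul_comm (y _), sub_eq_self,
    mul_eq_zero, hα, false_or, Pi.zero_apply]

lemma contractingWith_scaledForwardStep (hη : ∀ i, 0 < η i) (hF : Differentiable ℝ F)
    {c d α : ℝ} (hc : 0 < c) (hmono : ∀ x, logNorm η (-(jac F x)) ≤ -c) (hd : 0 < d)
    (hdiag : ∀ x i, jac F x i i ≤ d) (hα : α ∈ Set.Ioc 0 (1 / d)) :
    ContractingWith (1 - α * c).toNNReal (scaledForwardStep η F α) := by
  refine ⟨Real.toNNReal_lt_one.2 (by nlinarith [hα.1]), LipschitzWith.of_dist_le_mul fun y y' => ?_⟩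
  have hsub : scaledForwardStep η F α y - scaledForwardStep η F α y' =
      (forwardStep F α (η * y) - forwardStep F α (η * y')) / η := by
    ext i
    simp [scaledForwardStep, sub_div]
  rw [dist_eq_norm, dist_eq_norm, hsub, ← wNorm_eq_norm_div hη, ← wNorm_mul_eq_norm hη, mul_sub]
  exact (wNorm_forwardStep_sub_le hη hF hmono hd hdiag hα _ _).trans
    (mul_le_mul_of_nonneg_right (Real.le_coe_toNNReal _) (wNorm_eq_norm_div hη _ ▸ norm_nonneg _))

lemma tendsto_forwardStep_iterates (hη : ∀ i, 0 < η i) {α : ℝ} (hα : α ≠ 0) {K : NNReal}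
    (hK : ContractingWith K (scaledForwardStep η F α)) {xs : Fin n → ℝ} (hxs : F xs = 0)
    {x : ℕ → Fin n → ℝ} (hx : ∀ k, x (k + 1) = forwardStep F α (x k)) :
    Tendsto x atTop (𝓝 xs) := by
  have hiter : ∀ k, x k / η = (scaledForwardStep η F α)^[k] (x 0 / η) := by
    intro k
    induction k with
    | zero => rfl
    | succ k ih =>
      rw [iterate_succ_apply', ← ih, hx, scaledForwardStep, mul_div_cancel_of_forall_pos hη]
  have hfix : xs / η = ContractingWith.fixedPoint _ hK := hK.fixedPoint_unique <|
    (isFixedPt_scaledForwardStep_iff hη hα _).2 (by rwa [mul_div_cancel_of_forall_pos hη])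
  have hlim := (tendsto_const_nhds (x := η)).mul (hK.tendsto_iterate_fixedPoint (x 0 / η))
  simpa only [← hiter, ← hfix, mul_div_cancel_of_forall_pos hη] using hlim

end ForwardStep

/-- Forward step method: strongly monotone case. -/
theorem stmt_7 {n : ℕ} (η : Fin n → ℝ) (hη : ∀ i, 0 < η i)
    (F : (Fin n → ℝ) → (Fin n → ℝ)) (hF : ContDiff ℝ 1 F)
    (c : ℝ) (hc : 0 < c) (hmono : ∀ x, logNorm η (-(jac F x)) ≤ -c)
    (d : ℝ) (hd : 0 < d) (hdiag : ∀ x i, jac F x i i ≤ d) :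
    (∃! xs : Fin n → ℝ, F xs = 0) ∧
    (∀ xs : Fin n → ℝ, F xs = 0 →
      ∀ α ∈ Set.Ioc (0 : ℝ) (1 / d), ∀ x : ℕ → (Fin n → ℝ),
        (∀ k, x (k + 1) = x k - α • F (x k)) →
        (∀ k, wNorm η (x (k + 1) - xs) ≤ (1 - α * c) * wNorm η (x k - xs)) ∧
        Tendsto x atTop (nhds xs)) := by
  have hF' : Differentiable ℝ F := hF.differentiable one_ne_zero
  have hcontr : ∀ α ∈ Set.Ioc (0 : ℝ) (1 / d),
      ContractingWith (1 - α * c).toNNReal (scaledForwardStep η F α) :=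
    fun α hα => contractingWith_scaledForwardStep hη hF' hc hmono hd hdiag hα
  have hd' : 1 / d ∈ Set.Ioc (0 : ℝ) (1 / d) := ⟨by positivity, le_rfl⟩
  have hfix := isFixedPt_scaledForwardStep_iff (F := F) hη hd'.1.ne'
  set p := ContractingWith.fixedPoint _ (hcontr _ hd')
  refine ⟨⟨η * p, (hfix p).1 (ContractingWith.fixedPoint_isFixedPt _), fun y hy => ?_⟩,
    fun xs hxs α hα x hx => ⟨fun k => ?_, ?_⟩⟩
  · have hy' : y / η = p :=
      (hcontr _ hd').fixedPoint_unique ((hfix _).2 (by rwa [mul_div_cancel_of_forall_pos hη]))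
    rw [← hy', mul_div_cancel_of_forall_pos hη]
  · simpa [hx, forwardStep, hxs] using wNorm_forwardStep_sub_le hη hF' hmono hd hdiag hα (x k) xs
  · exact tendsto_forwardStep_iterates hη hα.1.ne' (hcontr α hα) hxs hx
end
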